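/- Let q ≥ 1, let ξ ∈ L¹(ℝ^q) be measurable, let n ≥ 1 be a natural number, and let f ∈ L¹(ℝ^q). Let (Ω, 𝒞, ℙ) be a probability space and let ε : Ω × ℝ^q → ℝ be a jointly measurable noise such that for each ω ∈ Ω the realization ε_ω = ε(ω, ·) belongs to L¹(ℝ^q), and such that the map ω ↦ ‖ε_ω‖_{L¹(ℝ^q)} is integrable (in particular this holds when sup_{ω ∈ Ω} ∫_{ℝ^q} |ε_ω(x)| dx < ∞). Define the probabilistic sampling Kantorovich operator P_n^ω(f) = S_n(f + ε_ω). Then E[‖P_n^ω(f)‖_{L¹(ℝ^q)}] ≤ ‖ξ‖_{L¹(ℝ^q)} (‖f‖_{L¹(ℝ^q)} + E[‖ε_ω‖_{L¹(ℝ^q)}]), where E denotes expectation with respect to ℙ. -/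

import Mathlib

open MeasureTheory

/-- The cell `D_k^n = ∏_{j=1}^q [k_j/n, (k_j+1)/n)` of the uniform grid of step `1/n`. -/
def cell (q n : ℕ) (k : Fin q → ℤ) : Set (EuclideanSpace ℝ (Fin q)) :=
  WithLp.ofLp ⁻¹' (Set.univ.pi fun j => Set.Ico ((k j : ℝ) / n) (((k j : ℝ) + 1) / n))

/-- The sampling Kantorovich operator
`S_n(f)(x) = n^q ∑_{k ∈ ℤ^q} ξ(n x − k) ∫_{D_k^n} f(u) du`. -/
noncomputable def SK (q : ℕ) (ξ : EuclideanSpace ℝ (Fin q) → ℝ) (n : ℕ)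
    (f : EuclideanSpace ℝ (Fin q) → ℝ) (x : EuclideanSpace ℝ (Fin q)) : ℝ :=
  (n : ℝ) ^ q * ∑' k : Fin q → ℤ,
    ξ (WithLp.toLp 2 fun j => (n : ℝ) * x j - (k j : ℝ)) * ∫ u in cell q n k, f u

/-! Pointwise, `|S_n g (x)| ≤ n^q ∑_k |ξ(n x - k)| ∫_{D_k^n} |g|`. Integrating term by term
(Tonelli), each dilated translate `x ↦ |ξ(n x - k)|` has integral `n^{-q} ‖ξ‖₁`, and the cells
`D_k^n` tile `ℝ^q`, so `‖S_n g‖₁ ≤ ‖ξ‖₁ ‖g‖₁`. For `g = f + ε_ω` the triangle inequality gives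
`‖P_n^ω f‖₁ ≤ ‖ξ‖₁ (‖f‖₁ + ‖ε_ω‖₁)`, and taking expectations concludes. -/

open scoped ENNReal

section cell

variable {q n : ℕ}

lemma mem_cell_iff (hn : 0 < n) {k : Fin q → ℤ} {x : EuclideanSpace ℝ (Fin q)} :
    x ∈ cell q n k ↔ ∀ j, ⌊(n : ℝ) * x j⌋ = k j := by
  have hn' : (0 : ℝ) < n := by exact_mod_cast hn
  simp only [cell, Set.mem_preimage, Set.mem_univ_pi, Set.mem_Ico, Int.floor_eq_iff,
    div_le_iff₀ hn', lt_div_iff₀ hn', mul_comm (n : ℝ)]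

lemma measurableSet_cell (k : Fin q → ℤ) : MeasurableSet (cell q n k) :=
  (MeasurableSet.univ_pi fun _ => measurableSet_Ico).preimage (WithLp.measurable_ofLp 2 _)

lemma pairwise_disjoint_cell (hn : 0 < n) : Pairwise (Function.onFun Disjoint (cell q n)) := by
  intro k k' hkk'
  refine Set.disjoint_left.2 fun x hx hx' => hkk' (funext fun j => ?_)
  rw [← (mem_cell_iff hn).1 hx j, (mem_cell_iff hn).1 hx' j]

lemma iUnion_cell (hn : 0 < n) : ⋃ k, cell q n k = Set.univ :=
  Set.eq_univ_of_forall fun x =>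
    Set.mem_iUnion.2 ⟨fun j => ⌊(n : ℝ) * x j⌋, (mem_cell_iff hn).2 fun _ => rfl⟩

lemma tsum_setLIntegral_cell (hn : 0 < n) (g : EuclideanSpace ℝ (Fin q) → ℝ≥0∞) :
    ∑' k, ∫⁻ u in cell q n k, g u = ∫⁻ u, g u := by
  rw [← lintegral_iUnion measurableSet_cell (pairwise_disjoint_cell hn), iUnion_cell hn,
    setLIntegral_univ]

end cell

lemma lintegral_comp_smul_sub {E : Type*} [NormedAddCommGroup E] [NormedSpace ℝ E]
    [MeasurableSpace E] [BorelSpace E] [FiniteDimensional ℝ E] (μ : Measure E)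
    [μ.IsAddHaarMeasure] (g : E → ℝ≥0∞) {r : ℝ} (hr : r ≠ 0) (y : E) :
    ∫⁻ x, g (r • x - y) ∂μ = ENNReal.ofReal |(r ^ Module.finrank ℝ E)⁻¹| * ∫⁻ x, g x ∂μ := by
  rw [← lintegral_sub_right_eq_self g y, ← smul_eq_mul, ← lintegral_smul_measure,
    ← Measure.map_addHaar_smul μ hr]
  exact (lintegral_map_equiv (fun x => g (x - y)) (MeasurableEquiv.smul₀ r hr)).symm

lemma integral_abs_add_le {α : Type*} [MeasurableSpace α] {μ : Measure α} {f g : α → ℝ}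
    (hf : Integrable f μ) (hg : Integrable g μ) :
    ∫ x, |(f + g) x| ∂μ ≤ (∫ x, |f x| ∂μ) + ∫ x, |g x| ∂μ :=
  (integral_mono (hf.add hg).abs (hf.abs.add hg.abs) fun x => abs_add_le (f x) (g x)).trans_eq
    (integral_add hf.abs hg.abs)

lemma toLp_mul_sub_intCast {q : ℕ} (r : ℝ) (x : EuclideanSpace ℝ (Fin q)) (k : Fin q → ℤ) :
    WithLp.toLp 2 (fun j => r * x j - (k j : ℝ)) = r • x - WithLp.toLp 2 (fun j => (k j : ℝ)) :=
  rfl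

section SK

variable {q : ℕ} {ξ : EuclideanSpace ℝ (Fin q) → ℝ} {n : ℕ}

lemma enorm_SK_le (g : EuclideanSpace ℝ (Fin q) → ℝ) (x : EuclideanSpace ℝ (Fin q)) :
    ‖SK q ξ n g x‖ₑ ≤ (n : ℝ≥0∞) ^ q * ∑' k : Fin q → ℤ,
      ‖ξ (WithLp.toLp 2 fun j => (n : ℝ) * x j - (k j : ℝ))‖ₑ * ∫⁻ u in cell q n k, ‖g u‖ₑ := by
  rw [SK, enorm_mul, enorm_pow, Real.enorm_natCast]
  gcongr
  refine enorm_tsum_le_tsum_enorm.trans (ENNReal.tsum_le_tsum fun k => ?_)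
  rw [enorm_mul]
  gcongr
  exact enorm_integral_le_lintegral_enorm g

lemma lintegral_enorm_SK_le (hmeas : Measurable ξ) (hn : 0 < n)
    (g : EuclideanSpace ℝ (Fin q) → ℝ) :
    ∫⁻ x, ‖SK q ξ n g x‖ₑ ≤ (∫⁻ x, ‖ξ x‖ₑ) * ∫⁻ x, ‖g x‖ₑ := by
  have hn' : (0 : ℝ) < n := by exact_mod_cast hn
  have hξk : ∀ k : Fin q → ℤ,
      Measurable fun x : EuclideanSpace ℝ (Fin q) =>
        ‖ξ (WithLp.toLp 2 fun j => (n : ℝ) * x j - (k j : ℝ))‖ₑ := fun k => by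
    simp only [toLp_mul_sub_intCast]
    exact (hmeas.comp (by fun_prop)).enorm
  have hdilate : ∀ k : Fin q → ℤ,
      ∫⁻ x : EuclideanSpace ℝ (Fin q), ‖ξ (WithLp.toLp 2 fun j => (n : ℝ) * x j - (k j : ℝ))‖ₑ
        = ((n : ℝ≥0∞) ^ q)⁻¹ * ∫⁻ x, ‖ξ x‖ₑ := fun k => by
    rw [funext fun x => congrArg (‖ξ ·‖ₑ) (toLp_mul_sub_intCast (n : ℝ) x k),
      lintegral_comp_smul_sub volume (‖ξ ·‖ₑ) hn'.ne', finrank_euclideanSpace_fin,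
      abs_of_pos (by positivity), ENNReal.ofReal_inv_of_pos (by positivity),
      ENNReal.ofReal_pow hn'.le, ENNReal.ofReal_natCast]
  calc ∫⁻ x, ‖SK q ξ n g x‖ₑ
      ≤ ∫⁻ x, (n : ℝ≥0∞) ^ q * ∑' k : Fin q → ℤ,
          ‖ξ (WithLp.toLp 2 fun j => (n : ℝ) * x j - (k j : ℝ))‖ₑ * ∫⁻ u in cell q n k, ‖g u‖ₑ :=
        lintegral_mono (enorm_SK_le g)
    _ = (n : ℝ≥0∞) ^ q * ∑' k : Fin q → ℤ,
          ((n : ℝ≥0∞) ^ q)⁻¹ * (∫⁻ x, ‖ξ x‖ₑ) * ∫⁻ u in cell q n k, ‖g u‖ₑ := by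
        rw [lintegral_const_mul' _ _ (by simp),
          lintegral_tsum fun k => ((hξk k).mul_const _).aemeasurable]
        simp_rw [lintegral_mul_const _ (hξk _), hdilate]
    _ = (∫⁻ x, ‖ξ x‖ₑ) * ∫⁻ x, ‖g x‖ₑ := by
        rw [ENNReal.tsum_mul_left, tsum_setLIntegral_cell hn, ← mul_assoc, ← mul_assoc,
          ENNReal.mul_inv_cancel (by positivity) (by simp), one_mul]

theorem integral_abs_SK_le (hmeas : Measurable ξ) (hξ : Integrable ξ) (hn : 0 < n)
    {g : EuclideanSpace ℝ (Fin q) → ℝ} (hg : Integrable g) :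
    ∫ x, |SK q ξ n g x| ≤ (∫ x, |ξ x|) * ∫ x, |g x| := by
  simp only [← Real.norm_eq_abs]
  calc ∫ x, ‖SK q ξ n g x‖
      ≤ (∫⁻ x, ‖SK q ξ n g x‖ₑ).toReal := by
        -- valid for any function, so the measurability of `SK q ξ n g` is never needed
        refine (Real.le_norm_self _).trans ((norm_integral_le_lintegral_norm _).trans_eq ?_)
        simp_rw [norm_norm, ofReal_norm]
    _ ≤ ((∫⁻ x, ‖ξ x‖ₑ) * ∫⁻ x, ‖g x‖ₑ).toReal :=
        ENNReal.toReal_mono (ENNReal.mul_ne_top hξ.2.ne hg.2.ne) (lintegral_enorm_SK_le hmeas hn g)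
    _ = (∫ x, ‖ξ x‖) * ∫ x, ‖g x‖ := by
        rw [ENNReal.toReal_mul, integral_norm_eq_lintegral_enorm hξ.1,
          integral_norm_eq_lintegral_enorm hg.1]

end SK

theorem PSK_expected_L1_bound_general (q : ℕ)
    (ξ : EuclideanSpace ℝ (Fin q) → ℝ) (hmeas : Measurable ξ) (hξ : Integrable ξ)
    (n : ℕ) (hn : 1 ≤ n)
    (f : EuclideanSpace ℝ (Fin q) → ℝ) (hf : Integrable f)
    (Ω : Type*) [MeasureSpace Ω] [IsProbabilityMeasure (volume : Measure Ω)]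
    (ε : Ω → EuclideanSpace ℝ (Fin q) → ℝ)
    (hεint : ∀ ω : Ω, Integrable (ε ω))
    (hεnorm : Integrable fun ω : Ω => ∫ x : EuclideanSpace ℝ (Fin q), |ε ω x|) :
    (∫ ω : Ω, ∫ x : EuclideanSpace ℝ (Fin q), |SK q ξ n (f + ε ω) x|)
      ≤ (∫ x : EuclideanSpace ℝ (Fin q), |ξ x|)
          * ((∫ x : EuclideanSpace ℝ (Fin q), |f x|)
              + ∫ ω : Ω, ∫ x : EuclideanSpace ℝ (Fin q), |ε ω x|) := by
  have hrealization : ∀ ω, ∫ x, |SK q ξ n (f + ε ω) x|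
      ≤ (∫ x, |ξ x|) * ((∫ x, |f x|) + ∫ x, |ε ω x|) := fun ω =>
    (integral_abs_SK_le hmeas hξ hn (hf.add (hεint ω))).trans <|
      mul_le_mul_of_nonneg_left (integral_abs_add_le hf (hεint ω))
        (integral_nonneg fun _ => abs_nonneg _)
  calc (∫ ω, ∫ x, |SK q ξ n (f + ε ω) x|)
      ≤ ∫ ω, (∫ x, |ξ x|) * ((∫ x, |f x|) + ∫ x, |ε ω x|) :=
        integral_mono_of_nonneg (ae_of_all _ fun _ => integral_nonneg fun _ => abs_nonneg _)
          (((integrable_const _).add hεnorm).const_mul _) (ae_of_all _ hrealization)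
    _ = _ := by
        rw [integral_const_mul, integral_add (integrable_const _) hεnorm, integral_const,
          probReal_univ, one_smul]

/-- for the probabilistic SK operator `P_n^ω(f) = S_n(f + ε_ω)` with
jointly measurable noise `ε` whose realizations are integrable with integrable `L¹` norms,
`E[‖P_n^ω(f)‖₁] ≤ ‖ξ‖₁ (‖f‖₁ + E[‖ε_ω‖₁])`. -/
theorem PSK_expected_L1_bound (q : ℕ) (hq : 1 ≤ q)
    (ξ : EuclideanSpace ℝ (Fin q) → ℝ) (hmeas : Measurable ξ) (hξ : Integrable ξ)
    (n : ℕ) (hn : 1 ≤ n)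
    (f : EuclideanSpace ℝ (Fin q) → ℝ) (hf : Integrable f)
    (Ω : Type*) [MeasureSpace Ω] [IsProbabilityMeasure (volume : Measure Ω)]
    (ε : Ω → EuclideanSpace ℝ (Fin q) → ℝ)
    (hεmeas : Measurable (Function.uncurry ε))
    (hεint : ∀ ω : Ω, Integrable (ε ω))
    (hεnorm : Integrable fun ω : Ω => ∫ x : EuclideanSpace ℝ (Fin q), |ε ω x|) :
    (∫ ω : Ω, ∫ x : EuclideanSpace ℝ (Fin q), |SK q ξ n (f + ε ω) x|)
      ≤ (∫ x : EuclideanSpace ℝ (Fin q), |ξ x|)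
          * ((∫ x : EuclideanSpace ℝ (Fin q), |f x|)
              + ∫ ω : Ω, ∫ x : EuclideanSpace ℝ (Fin q), |ε ω x|) :=
  PSK_expected_L1_bound_general q ξ hmeas hξ n hn f hf Ω ε hεint hεnorm
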